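/- arXiv:1403.6930 — 3 statements merged into one kernel-verified Lean document; each statement's English description precedes it below -/
import Mathlib

section
/- Let k be an algebraically closed field of characteristic zero, let R and B be affine domains over k with an injective k-algebra map R → B, and let D be an R-derivation of B. Then there exist a subfield k₀ of k that is a finitely generated field extension of ℚ, finitely generated k₀-subalgebras B₀ ⊆ B and R₀ ⊆ R with the image of R₀ under R → B contained in B₀, such that: (1) the multiplication maps B₀ ⊗_{k₀} k → B and R₀ ⊗_{k₀} k → R are k-algebra isomorphisms; (2) D(B₀) ⊆ B₀ and the restriction D₀ := D|_{B₀} is an R₀-derivation of B₀; and (3) D₀ is locally nilpotent if and only if D is locally nilpotent. -/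
/-!
Present `B` and `R` as quotients of polynomial rings over `k` with finitely generated kernels,
and let `k₀` be generated by the coefficients of the kernel generators, of lifts of the
`D(xᵢ)`, and of lifts of the images in `B` of the generators of `R`. The subalgebras
`B₀ = k₀[xᵢ]` and `R₀ = k₀[yⱼ]` then span `B` and `R` over `k`, and `D` preserves `B₀`.
The kernel of `k[x] → B` is generated by polynomials over `k₀`, hence it is `k`-spanned by
its elements over `k₀`; applying a `k₀`-linear functional `k → k₀` to the coefficients of a
`k`-linear relation among elements of `B₀` therefore gives a `k₀`-linear relation, which is
why `k ⊗_{k₀} B₀ → B` is injective. Finally, the vectors killed by a power of `D` form a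
`k`-subspace, so local nilpotency on the spanning set `B₀` gives it on all of `B`.
-/

open MvPolynomial

namespace MvPolynomial

section MapCoeffs

variable {R A σ : Type*} [CommRing R] [CommRing A] [Algebra R A]

noncomputable def mapCoeffs (π : A →ₗ[R] R) : MvPolynomial σ A →ₗ[R] MvPolynomial σ R where
  toFun := AddMonoidAlgebra.map π.toAddMonoidHom
  map_add' := AddMonoidAlgebra.map_add _
  map_smul' r p := by ext m; simp [coeff_addMonoidAlgebraMap]

theorem coeff_mapCoeffs (π : A →ₗ[R] R) (p : MvPolynomial σ A) (m : σ →₀ ℕ) :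
    coeff m (mapCoeffs π p) = π (coeff m p) :=
  coeff_addMonoidAlgebraMap _ _ _

theorem mapCoeffs_smul_map (π : A →ₗ[R] R) (a : A) (p : MvPolynomial σ R) :
    mapCoeffs π (a • map (algebraMap R A) p) = π a • p := by
  ext m
  rw [coeff_mapCoeffs, coeff_smul, coeff_map, smul_eq_mul, mul_comm, ← Algebra.smul_def,
    π.map_smul, coeff_smul, smul_eq_mul, smul_eq_mul, mul_comm]

theorem span_range_map_eq_top :
    Submodule.span A (Set.range (map (σ := σ) (algebraMap R A))) = ⊤ := by
  refine top_le_iff.mp ((basisMonomials σ A).span_eq.symm.le.trans (Submodule.span_mono ?_))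
  rintro _ ⟨m, rfl⟩
  exact ⟨monomial m 1, by simp⟩

theorem restrictScalars_span_le_span_map_comap {G : Set (MvPolynomial σ A)}
    (hG : G ⊆ Set.range (map (algebraMap R A))) :
    (Ideal.span G).restrictScalars A ≤
      Submodule.span A (map (algebraMap R A) '' (Ideal.span G).comap (map (algebraMap R A))) := by
  rw [Ideal.span, ← Submodule.span_smul_of_span_eq_top (span_range_map_eq_top (R := R))]
  refine Submodule.span_mono ?_
  rintro _ ⟨_, ⟨p, rfl⟩, g, hg, rfl⟩
  obtain ⟨q, rfl⟩ := hG hg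
  refine ⟨p * q, ?_, by simp⟩
  simpa using Ideal.mul_mem_left _ _ (Ideal.subset_span hg)

theorem mapCoeffs_mem_comap_span {G : Set (MvPolynomial σ A)}
    (hG : G ⊆ Set.range (map (algebraMap R A))) (π : A →ₗ[R] R) {z : MvPolynomial σ A}
    (hz : z ∈ Ideal.span G) : mapCoeffs π z ∈ (Ideal.span G).comap (map (algebraMap R A)) := by
  replace hz := restrictScalars_span_le_span_map_comap hG hz
  rw [← Submodule.restrictScalars_mem R,
    ← Submodule.span_smul_of_span_eq_top Submodule.span_univ] at hz
  induction hz using Submodule.span_induction with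
  | mem x hx =>
    obtain ⟨a, -, _, ⟨p, hp, rfl⟩, rfl⟩ := hx
    rw [mapCoeffs_smul_map]
    exact Submodule.smul_of_tower_mem _ _ hp
  | zero => simp
  | add x y _ _ hx hy => simpa using add_mem hx hy
  | smul r x _ hx => simpa using Submodule.smul_of_tower_mem _ r hx

end MapCoeffs

theorem adjoin_range_comp_X_eq_top {L A σ : Type*} [CommRing L] [CommRing A] [Algebra L A]
    {φ : MvPolynomial σ L →ₐ[L] A}
    (hφ : Function.Surjective φ) : Algebra.adjoin L (Set.range fun i => φ (X i)) = ⊤ := by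
  rw [Set.range_comp' φ X, ← AlgHom.map_adjoin, adjoin_range_X, Algebra.map_top,
    (AlgHom.range_eq_top φ).mpr hφ]

section Descent

variable {K L A σ : Type*} [Field K] [CommRing L] [Algebra K L] [CommRing A] [Algebra L A]
  [Algebra K A] [IsScalarTower K L A]

theorem aeval_comp_X_apply (φ : MvPolynomial σ L →ₐ[L] A) (p : MvPolynomial σ K) :
    aeval (fun i => φ (X i)) p = φ (map (algebraMap K L) p) := by
  conv_rhs => rw [aeval_unique φ]
  exact (aeval_map_algebraMap L _ p).symm

theorem map_mem_adjoin_range_comp_X (φ : MvPolynomial σ L →ₐ[L] A) {p : MvPolynomial σ L}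
    (hp : p ∈ Set.range (map (algebraMap K L))) :
    φ p ∈ Algebra.adjoin K (Set.range fun i => φ (X i)) := by
  obtain ⟨p, rfl⟩ := hp
  rw [Algebra.adjoin_range_eq_range_aeval, ← aeval_comp_X_apply]
  exact ⟨p, rfl⟩

theorem linearIndependent_of_ker_eq_span (φ : MvPolynomial σ L →ₐ[L] A)
    {G : Set (MvPolynomial σ L)} (hker : RingHom.ker φ = Ideal.span G)
    (hG : G ⊆ Set.range (map (algebraMap K L))) {ι : Type*} {f : ι → A}
    (hf : ∀ i, f i ∈ Algebra.adjoin K (Set.range fun j => φ (X j)))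
    (hli : LinearIndependent K f) : LinearIndependent L f := by
  simp only [Algebra.adjoin_range_eq_range_aeval, AlgHom.mem_range] at hf
  choose F hF using hf
  rw [linearIndependent_iff'] at hli ⊢
  intro s c hc i hi
  have hz : ∑ j ∈ s, c j • map (algebraMap K L) (F j) ∈ Ideal.span G := by
    rw [← hker, RingHom.mem_ker]
    simpa [← aeval_comp_X_apply, hF] using hc
  refine (Module.forall_dual_apply_eq_zero_iff K (c i)).mp fun π => ?_
  have hπ := mapCoeffs_mem_comap_span hG π hz
  simp only [map_sum, mapCoeffs_smul_map, Ideal.mem_comap, ← hker, RingHom.mem_ker,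
    ← aeval_comp_X_apply] at hπ
  refine hli s (fun j => π (c j)) ?_ i hi
  simpa [hF] using hπ

end Descent

theorem mem_range_map_closure_of_coeffs_subset {L σ : Type*} [Field L] {S : Finset L}
    {p : MvPolynomial σ L} (hp : p.coeffs ⊆ S) :
    p ∈ Set.range (map (algebraMap (Subfield.closure (S : Set L)) L)) :=
  mem_range_map_iff_coeffs_subset.mpr fun x hx => ⟨⟨x, Subfield.subset_closure (hp hx)⟩, rfl⟩

theorem exists_finset_mem_range_map {L σ τ : Type*} [Field L]
    (T : Finset (MvPolynomial σ L)) (U : Finset (MvPolynomial τ L)) :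
    ∃ S : Finset L,
      (∀ p ∈ T, p ∈ Set.range (map (algebraMap (Subfield.closure (S : Set L)) L))) ∧
      (∀ p ∈ U, p ∈ Set.range (map (algebraMap (Subfield.closure (S : Set L)) L))) := by
  classical
  refine ⟨T.biUnion coeffs ∪ U.biUnion coeffs,
    fun p hp => mem_range_map_closure_of_coeffs_subset ?_,
    fun p hp => mem_range_map_closure_of_coeffs_subset ?_⟩
  · exact (Finset.subset_biUnion_of_mem _ hp).trans Finset.subset_union_left
  · exact (Finset.subset_biUnion_of_mem _ hp).trans Finset.subset_union_right

end MvPolynomial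

theorem Algebra.FiniteType.exists_presentation (K A : Type*) [CommRing K] [IsNoetherianRing K]
    [CommRing A] [Algebra K A] [Algebra.FiniteType K A] :
    ∃ (n : ℕ) (φ : MvPolynomial (Fin n) K →ₐ[K] A) (G : Finset (MvPolynomial (Fin n) K)),
      Function.Surjective φ ∧ RingHom.ker φ = Ideal.span G := by
  have := Algebra.FinitePresentation.of_finiteType.mp ‹Algebra.FiniteType K A›
  obtain ⟨n, φ, hφ, G, hG⟩ := Algebra.FinitePresentation.out (R := K) (A := A)
  exact ⟨n, φ, G, hφ, hG.symm⟩

theorem Algebra.span_adjoin_eq_toSubmodule_adjoin {K L A : Type*} [CommRing K] [CommRing L]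
    [Algebra K L] [CommRing A] [Algebra L A] [Algebra K A] [IsScalarTower K L A] (s : Set A) :
    Submodule.span L (Algebra.adjoin K s : Set A) =
      Subalgebra.toSubmodule (Algebra.adjoin L s) := by
  refine le_antisymm (Submodule.span_le.mpr ?_) ?_
  · exact Algebra.adjoin_le (S := (Algebra.adjoin L s).restrictScalars K) Algebra.subset_adjoin
  · rw [Algebra.adjoin_eq_span]
    exact Submodule.span_mono (Submonoid.closure_le.mpr fun a ha => Algebra.subset_adjoin ha)

theorem Subfield.adjoin_toSubring_eq_closure {L A : Type*} [Field L] [CommRing A] [Algebra L A]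
    (K : Subfield L) (s : Set A) :
    (Algebra.adjoin K s).toSubring = Subring.closure (algebraMap L A '' K ∪ s) := by
  rw [Algebra.adjoin_eq_ring_closure,
    show algebraMap K A = (algebraMap L A).comp K.subtype from rfl, RingHom.coe_comp,
    Set.range_comp, Subfield.coe_subtype, Subtype.range_coe]

theorem Subfield.span_adjoin_range_comp_X_eq_top {L A σ : Type*} [Field L] [CommRing A]
    [Algebra L A] (K : Subfield L) {φ : MvPolynomial σ L →ₐ[L] A} (hφ : Function.Surjective φ) :
    Submodule.span L (Algebra.adjoin K (Set.range fun i => φ (X i)) : Set A) = ⊤ := by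
  rw [Algebra.span_adjoin_eq_toSubmodule_adjoin, adjoin_range_comp_X_eq_top hφ,
    Algebra.top_toSubmodule]

theorem Subfield.linearIndependent_iff_forall_sum_smul_eq_zero {L M ι : Type*} [Field L]
    [AddCommGroup M] [Module L M] [Fintype ι] (K : Subfield L) (f : ι → M) :
    LinearIndependent K f ↔
      ∀ c : ι → L, (∀ i, c i ∈ K) → ∑ i, c i • f i = 0 → ∀ i, c i = 0 := by
  rw [Fintype.linearIndependent_iff]
  refine ⟨fun h c hc hsum i => ?_, fun h c hsum i => ?_⟩
  · simpa using congrArg Subtype.val (h (fun i => ⟨c i, hc i⟩) hsum i)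
  · exact Subtype.ext (h (fun i => c i) (fun i => (c i).2) hsum i)

theorem Subfield.forall_sum_smul_eq_zero_of_ker_eq_span {L A σ ι : Type*} [Field L]
    [CommRing A] [Algebra L A] [Fintype ι] (K : Subfield L) (φ : MvPolynomial σ L →ₐ[L] A)
    {G : Set (MvPolynomial σ L)} (hker : RingHom.ker φ = Ideal.span G)
    (hG : G ⊆ Set.range (MvPolynomial.map (algebraMap K L))) {f : ι → A}
    (hf : ∀ i, f i ∈ Algebra.adjoin K (Set.range fun j => φ (X j)))
    (h : ∀ c : ι → L, (∀ i, c i ∈ K) → ∑ i, c i • f i = 0 → ∀ i, c i = 0) :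
    ∀ c : ι → L, ∑ i, c i • f i = 0 → ∀ i, c i = 0 :=
  Fintype.linearIndependent_iff.mp <| linearIndependent_of_ker_eq_span φ hker hG hf <|
    (K.linearIndependent_iff_forall_sum_smul_eq_zero f).mpr h

theorem Derivation.map_mem_adjoin {K R A : Type*} [CommRing K] [CommRing R] [CommRing A]
    [Algebra R A] [Algebra K A] (D : Derivation R A A) (hK : ∀ r : K, D (algebraMap K A r) = 0)
    {s : Set A} (hs : ∀ a ∈ s, D a ∈ Algebra.adjoin K s) {a : A}
    (ha : a ∈ Algebra.adjoin K s) : D a ∈ Algebra.adjoin K s := by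
  induction ha using Algebra.adjoin_induction with
  | mem x hx => exact hs x hx
  | algebraMap r => simp [hK]
  | add x y _ _ hx hy => simpa using add_mem hx hy
  | mul x y hx' hy' hx hy =>
    rw [Derivation.leibniz, smul_eq_mul, smul_eq_mul]
    exact add_mem (mul_mem hx' hy) (mul_mem hy' hx)

theorem Module.End.forall_exists_iterate_eq_zero_iff_of_span_eq_top {K M : Type*} [CommRing K]
    [AddCommGroup M] [Module K M] (T : Module.End K M) {S : Set M}
    (hS : Submodule.span K S = ⊤) :
    (∀ s ∈ S, ∃ n, 1 ≤ n ∧ T^[n] s = 0) ↔ ∀ m, ∃ n, 1 ≤ n ∧ T^[n] m = 0 := by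
  refine ⟨fun h m => ?_, fun h s _ => h s⟩
  have hle : Submodule.span K S ≤ T.maxGenEigenspace 0 := by
    refine Submodule.span_le.mpr fun s hs => ?_
    obtain ⟨n, -, hn⟩ := h s hs
    exact (mem_maxGenEigenspace _ _ _).mpr ⟨n, by simpa [pow_apply] using hn⟩
  obtain ⟨n, hn⟩ := (mem_maxGenEigenspace _ _ _).mp (hle (hS ▸ Submodule.mem_top))
  replace hn : (T ^ n) m = 0 := by simpa using hn
  refine ⟨n + 1, n.succ_pos, ?_⟩
  rw [Function.iterate_succ_apply', ← pow_apply, hn, map_zero]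

theorem exists_finitelyGenerated_subfield_model_general
    (k : Type*) [Field k]
    (R B : Type*) [CommRing R] [Algebra k R] [Algebra.FiniteType k R]
    [CommRing B] [Algebra k B] [Algebra.FiniteType k B]
    [Algebra R B] [IsScalarTower k R B]
    (D : Derivation R B B) :
    ∃ (k₀ : Subfield k) (B₀ : Subring B) (R₀ : Subring R),
      -- `k₀` is a finitely generated field extension of the prime field `ℚ`
      (∃ S : Finset k, k₀ = Subfield.closure (↑S : Set k)) ∧
      -- `B₀` is a finitely generated `k₀`-subalgebra of `B`
      (∃ s : Finset B,
        B₀ = Subring.closure ((algebraMap k B '' (k₀ : Set k)) ∪ (↑s : Set B))) ∧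
      -- `R₀` is a finitely generated `k₀`-subalgebra of `R`
      (∃ s : Finset R,
        R₀ = Subring.closure ((algebraMap k R '' (k₀ : Set k)) ∪ (↑s : Set R))) ∧
      -- the image of `R₀` under `R → B` is contained in `B₀`
      (∀ r ∈ R₀, algebraMap R B r ∈ B₀) ∧
      -- (1) the multiplication map `B₀ ⊗_{k₀} k → B` is a `k`-algebra isomorphism:
      -- it is surjective (`B₀` spans `B` over `k`) ...
      Submodule.span k (B₀ : Set B) = ⊤ ∧
      -- ... and injective (`k₀`-linearly independent families in `B₀` remain
      -- `k`-linearly independent in `B`)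
      (∀ (n : ℕ) (f : Fin n → B), (∀ i, f i ∈ B₀) →
        (∀ c : Fin n → k, (∀ i, c i ∈ k₀) → (∑ i, c i • f i) = 0 → ∀ i, c i = 0) →
        (∀ c : Fin n → k, (∑ i, c i • f i) = 0 → ∀ i, c i = 0)) ∧
      -- and likewise the multiplication map `R₀ ⊗_{k₀} k → R` is an isomorphism
      Submodule.span k (R₀ : Set R) = ⊤ ∧
      (∀ (n : ℕ) (f : Fin n → R), (∀ i, f i ∈ R₀) →
        (∀ c : Fin n → k, (∀ i, c i ∈ k₀) → (∑ i, c i • f i) = 0 → ∀ i, c i = 0) →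
        (∀ c : Fin n → k, (∑ i, c i • f i) = 0 → ∀ i, c i = 0)) ∧
      -- (2) `D` restricts to a derivation `D₀` of `B₀` (which is automatically an
      -- `R₀`-derivation since `D` kills the image of `R ⊇ R₀`)
      (∀ b ∈ B₀, D b ∈ B₀) ∧
      -- (3) `D₀ = D|_{B₀}` is locally nilpotent iff `D` is locally nilpotent
      ((∀ b ∈ B₀, ∃ n : ℕ, 1 ≤ n ∧ (⇑D)^[n] b = 0) ↔
        (∀ b : B, ∃ n : ℕ, 1 ≤ n ∧ (⇑D)^[n] b = 0)) := by
  classical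
  obtain ⟨m, φ, GB, hφ, hGB⟩ := Algebra.FiniteType.exists_presentation k B
  obtain ⟨n, ψ, GR, hψ, hGR⟩ := Algebra.FiniteType.exists_presentation k R
  choose d hd using fun i => hφ (D (φ (X i)))
  choose q hq using fun j => hφ (algebraMap R B (ψ (X j)))
  obtain ⟨S, hSB, hSR⟩ :=
    exists_finset_mem_range_map (GB ∪ Finset.univ.image d ∪ Finset.univ.image q) GR
  set k₀ := Subfield.closure (S : Set k)
  set B₀ := Algebra.adjoin k₀ (Set.range fun i => φ (X i))
  set R₀ := Algebra.adjoin k₀ (Set.range fun j => ψ (X j))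
  have hspanB := k₀.span_adjoin_range_comp_X_eq_top hφ
  have hRB : ∀ r ∈ R₀, algebraMap R B r ∈ B₀ := fun r hr =>
    Algebra.adjoin_le (S := B₀.comap ((IsScalarTower.toAlgHom k R B).restrictScalars k₀))
      (by rintro _ ⟨j, rfl⟩; simpa [← hq] using map_mem_adjoin_range_comp_X φ (hSB (q j) (by simp)))
      hr
  have hDB : ∀ b ∈ B₀, D b ∈ B₀ := fun b hb => D.map_mem_adjoin
    (fun r => by rw [IsScalarTower.algebraMap_apply k₀ k B,
      IsScalarTower.algebraMap_apply k R B, D.map_algebraMap])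
    (by rintro _ ⟨i, rfl⟩; simpa [← hd] using map_mem_adjoin_range_comp_X φ (hSB (d i) (by simp)))
    hb
  refine ⟨k₀, B₀.toSubring, R₀.toSubring, ⟨S, rfl⟩, ⟨Finset.univ.image fun i => φ (X i), ?_⟩,
    ⟨Finset.univ.image fun j => ψ (X j), ?_⟩, hRB, hspanB,
    fun _ f hf => k₀.forall_sum_smul_eq_zero_of_ker_eq_span φ hGB
      (fun p hp => hSB p (by simp_all)) hf,
    k₀.span_adjoin_range_comp_X_eq_top hψ,
    fun _ f hf => k₀.forall_sum_smul_eq_zero_of_ker_eq_span ψ hGR hSR hf,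
    hDB, Module.End.forall_exists_iterate_eq_zero_iff_of_span_eq_top
      ((D : B →ₗ[R] B).restrictScalars k) hspanB⟩
  · simp [B₀, Subfield.adjoin_toSubring_eq_closure]
  · simp [R₀, Subfield.adjoin_toSubring_eq_closure]

/-- **Lemma 1.2**: an injective map of affine domains `R → B` over an algebraically closed
field `k` of characteristic zero, together with an `R`-derivation `D` of `B`, descends to
a subfield `k₀` of `k` finitely generated over `ℚ` (the prime field): there are finitely
generated `k₀`-subalgebras `B₀ ⊆ B` and `R₀ ⊆ R` with `R₀` mapping into `B₀` such that the
multiplication maps `B₀ ⊗_{k₀} k → B` and `R₀ ⊗_{k₀} k → R` are isomorphisms (expressed by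
spanning and preservation of linear independence), `D` restricts to an `R₀`-derivation `D₀`
of `B₀`, and `D₀` is locally nilpotent iff `D` is. -/
theorem exists_finitelyGenerated_subfield_model
    (k : Type*) [Field k] [IsAlgClosed k] [CharZero k]
    (R B : Type*) [CommRing R] [IsDomain R] [Algebra k R] [Algebra.FiniteType k R]
    [CommRing B] [IsDomain B] [Algebra k B] [Algebra.FiniteType k B]
    [Algebra R B] [IsScalarTower k R B]
    (hinj : Function.Injective (algebraMap R B))
    (D : Derivation R B B) :
    ∃ (k₀ : Subfield k) (B₀ : Subring B) (R₀ : Subring R),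
      -- `k₀` is a finitely generated field extension of the prime field `ℚ`
      (∃ S : Finset k, k₀ = Subfield.closure (↑S : Set k)) ∧
      -- `B₀` is a finitely generated `k₀`-subalgebra of `B`
      (∃ s : Finset B,
        B₀ = Subring.closure ((algebraMap k B '' (k₀ : Set k)) ∪ (↑s : Set B))) ∧
      -- `R₀` is a finitely generated `k₀`-subalgebra of `R`
      (∃ s : Finset R,
        R₀ = Subring.closure ((algebraMap k R '' (k₀ : Set k)) ∪ (↑s : Set R))) ∧
      -- the image of `R₀` under `R → B` is contained in `B₀`
      (∀ r ∈ R₀, algebraMap R B r ∈ B₀) ∧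
      -- (1) the multiplication map `B₀ ⊗_{k₀} k → B` is a `k`-algebra isomorphism:
      -- it is surjective (`B₀` spans `B` over `k`) ...
      Submodule.span k (B₀ : Set B) = ⊤ ∧
      -- ... and injective (`k₀`-linearly independent families in `B₀` remain
      -- `k`-linearly independent in `B`)
      (∀ (n : ℕ) (f : Fin n → B), (∀ i, f i ∈ B₀) →
        (∀ c : Fin n → k, (∀ i, c i ∈ k₀) → (∑ i, c i • f i) = 0 → ∀ i, c i = 0) →
        (∀ c : Fin n → k, (∑ i, c i • f i) = 0 → ∀ i, c i = 0)) ∧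
      -- and likewise the multiplication map `R₀ ⊗_{k₀} k → R` is an isomorphism
      Submodule.span k (R₀ : Set R) = ⊤ ∧
      (∀ (n : ℕ) (f : Fin n → R), (∀ i, f i ∈ R₀) →
        (∀ c : Fin n → k, (∀ i, c i ∈ k₀) → (∑ i, c i • f i) = 0 → ∀ i, c i = 0) →
        (∀ c : Fin n → k, (∑ i, c i • f i) = 0 → ∀ i, c i = 0)) ∧
      -- (2) `D` restricts to a derivation `D₀` of `B₀` (which is automatically an
      -- `R₀`-derivation since `D` kills the image of `R ⊇ R₀`)
      (∀ b ∈ B₀, D b ∈ B₀) ∧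
      -- (3) `D₀ = D|_{B₀}` is locally nilpotent iff `D` is locally nilpotent
      ((∀ b ∈ B₀, ∃ n : ℕ, 1 ≤ n ∧ (⇑D)^[n] b = 0) ↔
        (∀ b : B, ∃ n : ℕ, 1 ≤ n ∧ (⇑D)^[n] b = 0)) :=
  exists_finitelyGenerated_subfield_model_general k R B D
end

section
/- Let k₁ ⊆ k be algebraically closed fields of characteristic zero. Let R₁ and B₁ be affine domains over k₁ with an injective k₁-algebra map R₁ → B₁, and let D₁ be an R₁-derivation of B₁. Set R = R₁ ⊗_{k₁} k, B = B₁ ⊗_{k₁} k, and let D = D₁ ⊗ k be the base-changed R-derivation of B. Let m₁ be a maximal ideal of R₁ and let m = m₁·R be the corresponding maximal ideal of R. If the induced derivation D_m on B/mB is locally nilpotent, then the induced derivation (D₁)_{m₁} on B₁/m₁B₁ is locally nilpotent. -/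
/-!
Since `b ↦ b ⊗ 1` intertwines `D₁` with `D`, the hypothesis applied to `b ⊗ 1` gives
`D₁ⁿ b ⊗ 1 ∈ (m₁B₁)·(B₁ ⊗ k)`. The extension `B₁ → B₁ ⊗[k₁] k` is a base change of the
faithfully flat extension `k₁ → k`, hence faithfully flat, so the extended ideal contracts back
to `m₁B₁` and `D₁ⁿ b ∈ m₁B₁`.
-/

open scoped TensorProduct

attribute [local instance] Algebra.TensorProduct.rightAlgebra

namespace TensorProduct

theorem iterate_tmul_of_apply_tmul {R M N : Type*} [CommSemiring R] [AddCommMonoid M]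
    [AddCommMonoid N] [Module R M] [Module R N] {f : M ⊗[R] N → M ⊗[R] N} {g : M → M}
    (hf : ∀ m n, f (m ⊗ₜ n) = g m ⊗ₜ n) (k : ℕ) (m : M) (n : N) :
    f^[k] (m ⊗ₜ n) = g^[k] m ⊗ₜ n := by
  induction k generalizing m with
  | zero => rfl
  | succ k ih => rw [Function.iterate_succ_apply, hf, ih, Function.iterate_succ_apply]

end TensorProduct

namespace Algebra.TensorProduct

theorem tmul_one_mem_map_includeLeft_iff {R A S : Type*} [CommRing R] [CommRing A] [CommRing S]
    [Algebra R A] [Algebra R S] [Module.FaithfullyFlat R S] (J : Ideal A) (x : A) :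
    x ⊗ₜ[R] (1 : S) ∈ J.map (includeLeftRingHom : A →+* A ⊗[R] S) ↔ x ∈ J := by
  conv_rhs => rw [← J.comap_map_eq_self_of_faithfullyFlat (B := A ⊗[R] S)]
  rfl

theorem map_map_includeLeftRingHom {R A B S : Type*} [CommRing R] [CommRing A] [CommRing B]
    [CommRing S] [Algebra R A] [Algebra R B] [Algebra R S] [Algebra A B] [IsScalarTower R A B]
    (I : Ideal A) :
    (I.map (includeLeftRingHom : A →+* A ⊗[R] S)).map
        (map (IsScalarTower.toAlgHom R A B) (AlgHom.id R S)).toRingHom =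
      (I.map (algebraMap A B)).map (includeLeftRingHom : B →+* B ⊗[R] S) := by
  rw [Ideal.map_map, Ideal.map_map]
  rfl

end Algebra.TensorProduct

theorem fiberwise_locallyNilpotent_descends_along_base_field_extension_general
    (k₁ k : Type*) [Field k₁] [Field k] [Algebra k₁ k]
    (R₁ B₁ : Type*) [CommRing R₁] [Algebra k₁ R₁]
    [CommRing B₁] [Algebra k₁ B₁]
    [Algebra R₁ B₁] [IsScalarTower k₁ R₁ B₁]
    (D₁ : Derivation R₁ B₁ B₁)
    (D : Derivation k (B₁ ⊗[k₁] k) (B₁ ⊗[k₁] k))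
    (hD : ∀ (b : B₁) (c : k), D (b ⊗ₜ[k₁] c) = (D₁ b) ⊗ₜ[k₁] c)
    (m₁ : Ideal R₁)
    (hLN : ∀ x : B₁ ⊗[k₁] k, ∃ n : ℕ, 1 ≤ n ∧
      (⇑D)^[n] x ∈ Ideal.map
        (Algebra.TensorProduct.map (IsScalarTower.toAlgHom k₁ R₁ B₁)
          (AlgHom.id k₁ k)).toRingHom
        (Ideal.map (Algebra.TensorProduct.includeLeftRingHom :
          R₁ →+* R₁ ⊗[k₁] k) m₁)) :
    ∀ b : B₁, ∃ n : ℕ, 1 ≤ n ∧ (⇑D₁)^[n] b ∈ Ideal.map (algebraMap R₁ B₁) m₁ := by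
  intro b
  obtain ⟨n, hn, hmem⟩ := hLN (b ⊗ₜ[k₁] 1)
  rw [TensorProduct.iterate_tmul_of_apply_tmul hD,
    Algebra.TensorProduct.map_map_includeLeftRingHom,
    Algebra.TensorProduct.tmul_one_mem_map_includeLeft_iff] at hmem
  exact ⟨n, hn, hmem⟩

/-- **Lemma 1.3 (descent of fiberwise local nilpotency along an extension of algebraically
closed fields).** Let `k₁ ⊆ k` be algebraically closed fields of characteristic zero,
`R₁ → B₁` an injective map of affine domains over `k₁`, `D₁` an `R₁`-derivation of `B₁`,
and `D` the base-changed derivation of `B = B₁ ⊗[k₁] k` (characterized by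
`D (b ⊗ c) = D₁ b ⊗ c`). Let `m₁` be a maximal ideal of `R₁` and `m = m₁·R` the
corresponding ideal of `R = R₁ ⊗[k₁] k`. If the derivation induced by `D` on `B/mB`
is locally nilpotent, then the derivation induced by `D₁` on `B₁/m₁B₁` is locally
nilpotent. -/
theorem fiberwise_locallyNilpotent_descends_along_base_field_extension
    (k₁ k : Type*) [Field k₁] [Field k] [IsAlgClosed k₁] [IsAlgClosed k]
    [CharZero k₁] [CharZero k] [Algebra k₁ k]
    (R₁ B₁ : Type*) [CommRing R₁] [IsDomain R₁] [Algebra k₁ R₁] [Algebra.FiniteType k₁ R₁]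
    [CommRing B₁] [IsDomain B₁] [Algebra k₁ B₁] [Algebra.FiniteType k₁ B₁]
    [Algebra R₁ B₁] [IsScalarTower k₁ R₁ B₁]
    (hinj : Function.Injective (algebraMap R₁ B₁))
    (D₁ : Derivation R₁ B₁ B₁)
    (D : Derivation k (B₁ ⊗[k₁] k) (B₁ ⊗[k₁] k))
    (hD : ∀ (b : B₁) (c : k), D (b ⊗ₜ[k₁] c) = (D₁ b) ⊗ₜ[k₁] c)
    (m₁ : Ideal R₁) (hm₁ : m₁.IsMaximal)
    (hLN : ∀ x : B₁ ⊗[k₁] k, ∃ n : ℕ, 1 ≤ n ∧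
      (⇑D)^[n] x ∈ Ideal.map
        (Algebra.TensorProduct.map (IsScalarTower.toAlgHom k₁ R₁ B₁)
          (AlgHom.id k₁ k)).toRingHom
        (Ideal.map (Algebra.TensorProduct.includeLeftRingHom :
          R₁ →+* R₁ ⊗[k₁] k) m₁)) :
    ∀ b : B₁, ∃ n : ℕ, 1 ≤ n ∧ (⇑D₁)^[n] b ∈ Ideal.map (algebraMap R₁ B₁) m₁ :=
  fiberwise_locallyNilpotent_descends_along_base_field_extension_general k₁ k R₁ B₁ D₁ D hD m₁ hLN
end

section
/- Let B be a finitely generated ℂ-algebra that is an integral domain, and let (f_n)_{n ∈ ℕ} be a sequence of nonzero elements of B. Then there exists a maximal ideal m of B such that f_n ∉ m for every n ∈ ℕ. Equivalently, the set of closed points of an irreducible affine variety over ℂ cannot be covered by countably many proper Zariski-closed subsets. -/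
/-!
Invert all the `f n`: the localization `A` of `B` is still a nonzero `ℂ`-algebra of countable
dimension. For a maximal ideal `m'` of `A`, the field `A ⧸ m'` has countable dimension over `ℂ`,
whereas a transcendental `x` would give the uncountable linearly independent family
`(x - c)⁻¹`, `c ∈ ℂ`; so `A ⧸ m' = ℂ`. Hence `B → A ⧸ m'` is onto a field, its kernel is a
maximal ideal of `B`, and it contains no `f n` since these become units in `A`.
-/

open Cardinal

universe u

theorem Set.Countable.submonoidClosure {M : Type*} [Monoid M] {s : Set M} (hs : s.Countable) :
    (Submonoid.closure s : Set M).Countable := by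
  have := hs.to_subtype
  rw [Submonoid.closure_eq_mrange]
  exact Set.countable_range _

theorem Algebra.FiniteType.rank_le_aleph0 (K A : Type*) [CommRing K] [Ring A] [Algebra K A]
    [Algebra.FiniteType K A] : Module.rank K A ≤ ℵ₀ := by
  obtain ⟨s, hs⟩ := Algebra.FiniteType.out (R := K) (A := A)
  rw [← Subalgebra.topEquiv.toLinearEquiv.rank_eq, ← hs]
  exact (Algebra.rank_adjoin_le _).trans (max_le s.countable_toSet.le_aleph0 le_rfl)

theorem IsLocalization.rank_le_aleph0 {K : Type*} {B : Type u} (A : Type u) [Field K]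
    [CommRing B] [CommRing A] [Algebra K B] [Algebra K A] [Algebra B A] [IsScalarTower K B A]
    (S : Submonoid B) [IsLocalization S A] (hS : (S : Set B).Countable)
    (hB : Module.rank K B ≤ ℵ₀) : Module.rank K A ≤ ℵ₀ := by
  have := hS.to_subtype
  let mk' : S → B →ₗ[K] A := fun s =>
    (LinearMap.mulRight K (IsLocalization.mk' A 1 s)).comp
      (IsScalarTower.toAlgHom K B A).toLinearMap
  have hmk' : Function.Surjective (Finsupp.lsum K mk') := by
    intro a
    obtain ⟨⟨b, s⟩, rfl⟩ := IsLocalization.mk'_surjective S a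
    exact ⟨Finsupp.single s b, by simp [mk', ← IsLocalization.mk'_eq_mul_mk'_one]⟩
  calc Module.rank K A ≤ Module.rank K (S →₀ B) := LinearMap.rank_le_of_surjective _ hmk'
    _ = #S * Module.rank K B := rank_finsupp' ..
    _ ≤ ℵ₀ := (mul_le_max _ _).trans (max_le (max_le mk_le_aleph0 hB) le_rfl)

theorem Algebra.IsAlgebraic.of_rank_le_aleph0 {K L : Type*} [Field K] [Uncountable K] [Field L]
    [Algebra K L] (hL : Module.rank K L ≤ ℵ₀) : Algebra.IsAlgebraic K L := by
  by_contra h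
  obtain ⟨x, hx⟩ := (Algebra.transcendental_iff_not_isAlgebraic.mpr h).transcendental
  have := hx.linearIndependent_sub_inv.cardinal_lift_le_rank.trans (lift_le.mpr hL)
  rw [lift_aleph0, lift_le_aleph0, mk_le_aleph0_iff] at this
  exact not_countable this

theorem IsAlgClosed.algebraMap_quotient_surjective_of_rank_le_aleph0 {K A : Type*} [Field K]
    [IsAlgClosed K] [Uncountable K] [CommRing A] [Algebra K A] (hA : Module.rank K A ≤ ℵ₀)
    (m : Ideal A) [m.IsMaximal] : Function.Surjective (algebraMap K (A ⧸ m)) := by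
  let := Ideal.Quotient.field m
  have hrank : Module.rank K (A ⧸ m) ≤ ℵ₀ :=
    (LinearMap.rank_le_of_surjective (Ideal.Quotient.mkₐ K m).toLinearMap
      (Ideal.Quotient.mkₐ_surjective K m)).trans hA
  have := Algebra.IsAlgebraic.of_rank_le_aleph0 hrank
  exact IsAlgClosed.algebraMap_bijective_of_isIntegral.2

theorem exists_isMaximal_forall_notMem_of_isUnit_algebraMap {K B A : Type*} [Field K]
    [IsAlgClosed K] [Uncountable K] [CommRing B] [CommRing A] [Nontrivial A] [Algebra K B]
    [Algebra K A] [Algebra B A] [IsScalarTower K B A] (hA : Module.rank K A ≤ ℵ₀) :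
    ∃ m : Ideal B, m.IsMaximal ∧ ∀ b, IsUnit (algebraMap B A b) → b ∉ m := by
  obtain ⟨m', hm'⟩ := Ideal.exists_maximal A
  let := Ideal.Quotient.field m'
  let φ : B →+* A ⧸ m' := (Ideal.Quotient.mk m').comp (algebraMap B A)
  have hφ : Function.Surjective φ := fun y => by
    obtain ⟨c, rfl⟩ := IsAlgClosed.algebraMap_quotient_surjective_of_rank_le_aleph0 hA m' y
    exact ⟨algebraMap K B c, by simp [φ, ← IsScalarTower.algebraMap_apply]⟩
  refine ⟨RingHom.ker φ, RingHom.ker_isMaximal_of_surjective φ hφ, fun b hb hbm => ?_⟩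
  rw [RingHom.mem_ker, RingHom.comp_apply, Ideal.Quotient.eq_zero_iff_mem] at hbm
  exact hm'.ne_top (Ideal.eq_top_of_isUnit_mem _ hbm hb)

/-- The closed points of an irreducible affine variety over `ℂ` cannot be covered by
countably many proper Zariski-closed subsets: given countably many nonzero elements
`f n` of a finitely generated complex domain `B`, some maximal ideal avoids them all. -/
theorem exists_maximal_ideal_avoiding_countably_many
    (B : Type*) [CommRing B] [IsDomain B] [Algebra ℂ B] [Algebra.FiniteType ℂ B]
    (f : ℕ → B) (hf : ∀ n : ℕ, f n ≠ 0) :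
    ∃ m : Ideal B, m.IsMaximal ∧ ∀ n : ℕ, f n ∉ m := by
  let S := Submonoid.closure (Set.range f)
  have hS : S ≤ nonZeroDivisors B := Submonoid.closure_le.mpr <|
    Set.range_subset_iff.mpr fun n => mem_nonZeroDivisors_of_ne_zero (hf n)
  have := IsLocalization.isDomain_localization hS
  have : Uncountable ℂ := Complex.ofReal_injective.uncountable
  have hrank : Module.rank ℂ (Localization S) ≤ ℵ₀ :=
    IsLocalization.rank_le_aleph0 _ S (Set.countable_range f).submonoidClosure
      (Algebra.FiniteType.rank_le_aleph0 ℂ B)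
  obtain ⟨m, hm, hunit⟩ := exists_isMaximal_forall_notMem_of_isUnit_algebraMap (B := B) hrank
  refine ⟨m, hm, fun n => hunit _ (IsLocalization.map_units _ (⟨f n, ?_⟩ : S))⟩
  exact Submonoid.subset_closure ⟨n, rfl⟩
end
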